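/- Let d ≥ 1, let p ≥ 1 be a real number, let M be a real symmetric positive definite d×d matrix satisfying m·I ≼ M ≼ m̄·I in the Loewner order for constants 0 < m ≤ m̄, and let γ ≥ 0. Then for every real d×d matrix J, √(det M) · ‖J M⁻¹ Jᵀ − γ·I‖_F^{2p} ≥ α · ‖J‖_F^{4p} − β, where α = 2^{1−2p} m^{d/2} / (m̄^{2p} d^{2p}) and β = m^{d/2} (γ² d)^p. (Coercivity of the integrand G(J, M) = √(det M) ‖J M⁻¹ Jᵀ − γI‖_F^{2p} of the new meshing functional.) -/

import Mathlib

open Matrix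

/-- The Frobenius norm of a real `d × d` matrix. -/
noncomputable def frob {d : ℕ} (A : Matrix (Fin d) (Fin d) ℝ) : ℝ :=
  Real.sqrt (∑ i, ∑ j, (A i j) ^ 2)

/-!
With `K = J M⁻¹ Jᵀ`, the bound `M ≼ m̄ I` gives `‖J‖² ≤ m̄ tr K`, and Cauchy–Schwarz gives
`tr K ≤ √d ‖K‖ ≤ √d (‖K - γI‖ + |γ| √d)`. Raising to the power `2p` and using convexity,
`(a + b)^q ≤ 2^(q-1) (a^q + b^q)`, bounds `‖J‖^(4p)` by `‖K - γI‖^(2p)` plus a constant;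
finally `m I ≼ M` gives `√(det M) ≥ m^(d/2)`.
-/

attribute [local instance] Matrix.frobeniusNormedAddCommGroup Matrix.frobeniusNormedSpace

theorem Real.two_rpow_one_sub_mul_rpow_le_rpow_add_rpow {x a b q : ℝ} (hx : 0 ≤ x) (ha : 0 ≤ a)
    (hb : 0 ≤ b) (hq : 1 ≤ q) (h : x ≤ a + b) : 2 ^ (1 - q) * x ^ q ≤ a ^ q + b ^ q := by
  have hconvex : (a + b) ^ q ≤ 2 ^ (q - 1) * (a ^ q + b ^ q) := by
    lift a to NNReal using ha
    lift b to NNReal using hb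
    exact_mod_cast NNReal.rpow_add_le_mul_rpow_add_rpow a b hq
  rw [show 1 - q = -(q - 1) by ring, Real.rpow_neg zero_le_two, inv_mul_le_iff₀ (by positivity)]
  exact (Real.rpow_le_rpow hx h (by linarith)).trans hconvex

namespace Matrix

variable {l n : Type*} [Fintype l] [Fintype n]

theorem frobenius_norm_sq_eq_sum (A : Matrix l n ℝ) : ‖A‖ ^ 2 = ∑ i, ∑ j, A i j ^ 2 := by
  rw [frobenius_norm_def, ← Real.rpow_natCast, ← Real.rpow_mul (by positivity)]
  norm_num

theorem frobenius_norm_one_real [DecidableEq n] :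
    ‖(1 : Matrix n n ℝ)‖ = √(Fintype.card n) := by
  simpa using congrArg NNReal.toReal (frobenius_nnnorm_one (n := n) (α := ℝ))

theorem trace_le_sqrt_card_mul_frobenius_norm (A : Matrix n n ℝ) :
    A.trace ≤ √(Fintype.card n) * ‖A‖ := by
  have hdiag : ∑ i, A i i ^ 2 ≤ ‖A‖ ^ 2 := by
    rw [frobenius_norm_sq_eq_sum]
    exact Finset.sum_le_sum fun i _ =>
      Finset.single_le_sum (f := fun j => A i j ^ 2) (fun j _ => sq_nonneg _) (Finset.mem_univ i)
  have hsq : A.trace ^ 2 ≤ (√(Fintype.card n) * ‖A‖) ^ 2 := calc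
    A.trace ^ 2 ≤ Fintype.card n * ∑ i, A i i ^ 2 := by
      simpa [trace] using sq_sum_le_card_mul_sum_sq (s := Finset.univ) (f := fun i => A i i)
    _ ≤ Fintype.card n * ‖A‖ ^ 2 := by gcongr
    _ = (√(Fintype.card n) * ‖A‖) ^ 2 := by rw [mul_pow, Real.sq_sqrt (by positivity)]
  exact (le_abs_self _).trans (abs_le_of_sq_le_sq hsq (by positivity))

theorem IsHermitian.le_eigenvalues [DecidableEq n] {M : Matrix n n ℝ} (hM : M.IsHermitian)
    {m : ℝ} (hlo : ∀ x, m * (x ⬝ᵥ x) ≤ x ⬝ᵥ M *ᵥ x) (i : n) : m ≤ hM.eigenvalues i := by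
  set v := hM.eigenvectorBasis i
  have hv : v.ofLp ⬝ᵥ v.ofLp = 1 := by
    have := real_inner_self_eq_norm_sq v
    rwa [EuclideanSpace.inner_eq_star_dotProduct, star_trivial,
      hM.eigenvectorBasis.orthonormal.1 i, one_pow] at this
  have := hlo v.ofLp
  rwa [hM.mulVec_eigenvectorBasis i, dotProduct_smul, smul_eq_mul, hv, mul_one, mul_one] at this

theorem IsHermitian.pow_card_le_det [DecidableEq n] {M : Matrix n n ℝ} (hM : M.IsHermitian)
    {m : ℝ} (hm : 0 ≤ m) (hlo : ∀ x, m * (x ⬝ᵥ x) ≤ x ⬝ᵥ M *ᵥ x) :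
    m ^ Fintype.card n ≤ M.det := by
  rw [hM.det_eq_prod_eigenvalues, ← Finset.card_univ, ← Finset.prod_const]
  exact Finset.prod_le_prod (fun _ _ => hm) fun i _ => by simpa using hM.le_eigenvalues hlo i

theorem IsHermitian.rpow_card_div_two_le_sqrt_det [DecidableEq n] {M : Matrix n n ℝ}
    (hM : M.IsHermitian) {m : ℝ} (hm : 0 ≤ m) (hlo : ∀ x, m * (x ⬝ᵥ x) ≤ x ⬝ᵥ M *ᵥ x) :
    m ^ ((Fintype.card n : ℝ) / 2) ≤ √M.det := calc
  m ^ ((Fintype.card n : ℝ) / 2) = √(m ^ Fintype.card n) := by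
    rw [Real.sqrt_eq_rpow, ← Real.rpow_natCast, ← Real.rpow_mul hm]; ring_nf
  _ ≤ √M.det := Real.sqrt_le_sqrt (hM.pow_card_le_det hm hlo)

theorem PosDef.dotProduct_le_mul_dotProduct_inv_mulVec [DecidableEq n] {M : Matrix n n ℝ}
    (hM : M.PosDef) {c : ℝ} (hc : 0 < c) (hhi : ∀ x, x ⬝ᵥ M *ᵥ x ≤ c * (x ⬝ᵥ x)) (x : n → ℝ) :
    x ⬝ᵥ x ≤ c * (x ⬝ᵥ M⁻¹ *ᵥ x) := by
  set y := M⁻¹ *ᵥ x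
  have hMy : M *ᵥ y = x := by
    rw [mulVec_mulVec, mul_nonsing_inv M hM.det_pos.ne'.isUnit, one_mulVec]
  have hsymm : y ⬝ᵥ M *ᵥ x = x ⬝ᵥ x := by
    rw [dotProduct_mulVec, ← mulVec_transpose, ← conjTranspose_eq_transpose_of_trivial,
      hM.isHermitian.eq, hMy, dotProduct_comm]
  -- test `M` at `x - c y`: `0 ≤ xᵀMx - 2c xᵀx + c² xᵀM⁻¹x ≤ -c xᵀx + c² xᵀM⁻¹x`
  have h := hM.posSemidef.dotProduct_mulVec_nonneg (x - c • y)
  simp only [star_trivial, mulVec_sub, mulVec_smul, hMy, sub_dotProduct, dotProduct_sub,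
    smul_dotProduct, dotProduct_smul, hsymm, smul_eq_mul] at h
  rw [dotProduct_comm y x] at h
  nlinarith [hhi x]

theorem frobenius_norm_sq_le_mul_trace {N : Matrix n n ℝ} {c : ℝ}
    (hN : ∀ x, x ⬝ᵥ x ≤ c * (x ⬝ᵥ N *ᵥ x)) (J : Matrix l n ℝ) :
    ‖J‖ ^ 2 ≤ c * (J * N * Jᵀ).trace := by
  have hdiag : ∀ i, (J * N * Jᵀ) i i = J i ⬝ᵥ N *ᵥ J i := fun i =>
    (dotProduct_mulVec _ _ _).symm
  rw [frobenius_norm_sq_eq_sum, trace, Finset.mul_sum]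
  refine Finset.sum_le_sum fun i _ => ?_
  simpa [hdiag, dotProduct, sq] using hN (J i)

theorem PosDef.frobenius_norm_sq_le_of_le_smul_one [DecidableEq l] [DecidableEq n]
    {M : Matrix n n ℝ} (hM : M.PosDef) {c : ℝ} (hc : 0 < c)
    (hhi : ∀ x, x ⬝ᵥ M *ᵥ x ≤ c * (x ⬝ᵥ x)) (γ : ℝ) (J : Matrix l n ℝ) :
    ‖J‖ ^ 2 ≤ c * √(Fintype.card l) * (‖J * M⁻¹ * Jᵀ - γ • 1‖ + |γ| * √(Fintype.card l)) := by
  set K := J * M⁻¹ * Jᵀ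
  calc ‖J‖ ^ 2 ≤ c * K.trace :=
        frobenius_norm_sq_le_mul_trace (hM.dotProduct_le_mul_dotProduct_inv_mulVec hc hhi) J
    _ ≤ c * (√(Fintype.card l) * ‖K‖) := by gcongr; exact trace_le_sqrt_card_mul_frobenius_norm K
    _ ≤ c * (√(Fintype.card l) * (‖K - γ • 1‖ + ‖γ • (1 : Matrix l l ℝ)‖)) := by
        gcongr; exact norm_le_norm_sub_add K (γ • 1)
    _ = _ := by rw [norm_smul, frobenius_norm_one_real, Real.norm_eq_abs]; ring

end Matrix

theorem frob_eq_norm {d : ℕ} (A : Matrix (Fin d) (Fin d) ℝ) : frob A = ‖A‖ := by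
  rw [frob, ← frobenius_norm_sq_eq_sum, Real.sqrt_sq (norm_nonneg _)]

theorem stmt0_general (d : ℕ) (hd : 1 ≤ d) (p : ℝ) (hp : 1 ≤ p)
    (M : Matrix (Fin d) (Fin d) ℝ) (hM : M.PosDef)
    (m mbar : ℝ) (hm : 0 < m) (hmm : m ≤ mbar)
    (hlo : ∀ x : Fin d → ℝ, m * (x ⬝ᵥ x) ≤ x ⬝ᵥ (M *ᵥ x))
    (hhi : ∀ x : Fin d → ℝ, x ⬝ᵥ (M *ᵥ x) ≤ mbar * (x ⬝ᵥ x))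
    (γ : ℝ) (J : Matrix (Fin d) (Fin d) ℝ) :
    Real.sqrt M.det * frob (J * M⁻¹ * Jᵀ - γ • 1) ^ (2 * p) ≥
      (2 : ℝ) ^ (1 - 2 * p) * m ^ ((d : ℝ) / 2) / (mbar ^ (2 * p) * (d : ℝ) ^ (2 * p)) *
        frob J ^ (4 * p) - m ^ ((d : ℝ) / 2) * (γ ^ 2 * (d : ℝ)) ^ p := by
  have hmbar : 0 < mbar := hm.trans_le hmm
  have hd1 : (1 : ℝ) ≤ d := by exact_mod_cast hd
  rw [frob_eq_norm, frob_eq_norm]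
  set a := ‖J * M⁻¹ * Jᵀ - γ • 1‖
  set c := |γ| * √d
  have hJ : ‖J‖ ^ 2 / (mbar * d) ≤ a + c := by
    rw [div_le_iff₀ (by positivity)]
    calc ‖J‖ ^ 2 ≤ mbar * √d * (a + c) := by
          simpa using hM.frobenius_norm_sq_le_of_le_smul_one hmbar hhi γ J
      _ ≤ mbar * d * (a + c) := by gcongr; exact Real.sqrt_le_self_iff.mpr (Or.inr hd1)
      _ = (a + c) * (mbar * d) := by ring
  have hpow := Real.two_rpow_one_sub_mul_rpow_le_rpow_add_rpow (by positivity) (norm_nonneg _)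
    (by positivity) (by linarith : 1 ≤ 2 * p) hJ
  have hx : (‖J‖ ^ 2 / (mbar * d)) ^ (2 * p) = ‖J‖ ^ (4 * p) / (mbar ^ (2 * p) * d ^ (2 * p)) := by
    rw [Real.div_rpow (by positivity) (by positivity), Real.mul_rpow hmbar.le (by positivity),
      ← Real.rpow_natCast, ← Real.rpow_mul (norm_nonneg _)]
    norm_num [← mul_assoc]
  have hc : c ^ (2 * p) = (γ ^ 2 * d) ^ p := by
    rw [Real.rpow_mul (by positivity), Real.rpow_two, mul_pow, sq_abs, Real.sq_sqrt (by positivity)]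
  have hdet : m ^ ((d : ℝ) / 2) ≤ √M.det := by
    simpa using hM.isHermitian.rpow_card_div_two_le_sqrt_det hm.le hlo
  rw [ge_iff_le]
  calc _ = m ^ ((d : ℝ) / 2) *
          (2 ^ (1 - 2 * p) * (‖J‖ ^ 2 / (mbar * d)) ^ (2 * p) - c ^ (2 * p)) := by
        rw [hx, hc]; ring
    _ ≤ m ^ ((d : ℝ) / 2) * a ^ (2 * p) := by gcongr; linarith
    _ ≤ √M.det * a ^ (2 * p) := by gcongr

/-- Coercivity of the integrand `G(J, M) = √(det M) ‖J M⁻¹ Jᵀ − γI‖_F^{2p}`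
of the new meshing functional. -/
theorem stmt0 (d : ℕ) (hd : 1 ≤ d) (p : ℝ) (hp : 1 ≤ p)
    (M : Matrix (Fin d) (Fin d) ℝ) (hM : M.PosDef)
    (m mbar : ℝ) (hm : 0 < m) (hmm : m ≤ mbar)
    (hlo : ∀ x : Fin d → ℝ, m * (x ⬝ᵥ x) ≤ x ⬝ᵥ (M *ᵥ x))
    (hhi : ∀ x : Fin d → ℝ, x ⬝ᵥ (M *ᵥ x) ≤ mbar * (x ⬝ᵥ x))
    (γ : ℝ) (hγ : 0 ≤ γ) (J : Matrix (Fin d) (Fin d) ℝ) :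
    Real.sqrt M.det * frob (J * M⁻¹ * Jᵀ - γ • 1) ^ (2 * p) ≥
      (2 : ℝ) ^ (1 - 2 * p) * m ^ ((d : ℝ) / 2) / (mbar ^ (2 * p) * (d : ℝ) ^ (2 * p)) *
        frob J ^ (4 * p) - m ^ ((d : ℝ) / 2) * (γ ^ 2 * (d : ℝ)) ^ p :=
  stmt0_general d hd p hp M hM m mbar hm hmm hlo hhi γ J
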